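/- Every finitely presentable group G admits a finite presentation ⟨y_1,…,y_m | s_1,…,s_t⟩ (with the relators s_1,…,s_t pairwise distinct nontrivial elements of the free group on y_1,…,y_m) such that for every generator y_i, the total number of occurrences of the letters y_i and y_i⁻¹ among the reduced words of all the relators s_1,…,s_t is exactly 3. (This is the group-theoretic content of the paper's theorem that a group with a presentation of genus g admits a presentation of the same genus in which every generator appears exactly three times among all relations; the new presentation is obtained by introducing generators x_i^j for the j-th occurrence of x_i together with the chain relations x_i^j (x_i^{j-1})⁻¹.) -/

import Mathlib

/-!
First pad the presentation: drop the trivial relator and, for every generator `x`, add a new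
generator `z` together with the relators `z` and `x z x⁻¹`. This does not change the group, and
now every generator occurs at least twice.

Then give every occurrence of a letter in a relator a generator of its own, rewrite each relator
in these new generators, and tie together the occurrences `x¹, …, xⁿ` of each letter `x` by the
cyclic relators `xʲ⁺¹ (xʲ)⁻¹`, i.e. `of (σ p) * (of p)⁻¹` for a permutation `σ` of the occurrences
whose cycles are exactly the sets of occurrences of the single letters. Since the cycles connect
all occurrences of a letter, the group is unchanged. Each new generator `p` occurs once in its
rewritten relator and twice among the cyclic ones (as `σ q` for `q = σ⁻¹ p`, and as `p`): three
times in all. Because `n ≥ 2`, `σ` has no fixed points, so the cyclic relators are reduced words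
of length two and nontrivial.
-/

open Function Equiv FreeGroup

universe u

namespace Equiv.Perm

variable {P β : Type*}

theorem SameCycle.apply_eq_of_comp_eq {σ : Perm P} {g : P → β} (hg : g ∘ σ = g) {x y : P}
    (h : σ.SameCycle x y) : g x = g y := by
  obtain ⟨i, rfl⟩ := h
  have hg' (z : P) : g (σ z) = g z := congrFun hg z
  induction i using Int.induction_on with
  | zero => rfl
  | succ i ih => rwa [add_comm, zpow_add, zpow_one, mul_apply, hg']
  | pred i ih =>
    rwa [sub_eq_neg_add, zpow_add, zpow_neg_one, mul_apply, ← hg' (σ⁻¹ _), coe_inv,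
      apply_symm_apply]

theorem exists_sameCycle_iff_apply_eq_apply [Finite P] (f : P → β) :
    ∃ σ : Perm P, ∀ x y, σ.SameCycle x y ↔ f x = f y := by
  classical
  have hcycle (b : β) : ∃ τ : Perm {x // f x = b}, ∀ x y, τ.SameCycle x y := by
    have := Fintype.ofFinite {x // f x = b}
    obtain ⟨τ, hτ, -⟩ := (Finset.univ : Finset {x // f x = b}).exists_cycleOn
    exact ⟨τ, fun x y => hτ.2 (by simp) (by simp)⟩
  choose τ hτ using hcycle
  let σ : Perm P := (sigmaFiberEquiv f).permCongrHom (sigmaCongrRightHom _ τ)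
  have hσ (i : ℤ) (x : P) : (σ ^ i) x = ((τ (f x) ^ i) ⟨x, rfl⟩ : P) := by
    rw [← map_zpow, ← map_zpow, permCongrHom_coe, permCongr_apply]
    rfl
  refine ⟨σ, fun x y => ⟨fun h => h.apply_eq_of_comp_eq (funext fun z => ?_), fun h => ?_⟩⟩
  · rw [comp_apply, ← zpow_one σ, hσ]
    exact ((τ (f z) ^ (1 : ℤ)) ⟨z, rfl⟩).2
  · obtain ⟨i, hi⟩ := hτ (f x) ⟨x, rfl⟩ ⟨y, h.symm⟩
    exact ⟨i, by rw [hσ, hi]⟩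

end Equiv.Perm

namespace FreeGroup

variable {α β : Type*}

theorem IsReduced.of_isChain_ne {L : List (α × Bool)} (h : (L.map Prod.fst).IsChain (· ≠ ·)) :
    IsReduced L :=
  ((List.isChain_map _).1 h).imp fun _ _ hne heq => absurd heq hne

variable [DecidableEq α]

theorem toWord_mk_of_isReduced {L : List (α × Bool)} (h : IsReduced L) : (mk L).toWord = L := by
  rw [toWord_mk, h.reduce_eq]

theorem toWord_map_of_injective [DecidableEq β] {f : α → β} (hf : Injective f) (x : FreeGroup α) :
    (map f x).toWord = x.toWord.map fun y => (f y.1, y.2) := by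
  conv_lhs => rw [← mk_toWord (x := x), map.mk]
  exact toWord_mk_of_isReduced <|
    (List.isChain_map _).2 <| isReduced_toWord.imp fun _ _ h heq => h (hf heq)

theorem toWord_of_mul_inv_of {a b : α} (h : a ≠ b) :
    (of a * (of b)⁻¹).toWord = [(a, true), (b, false)] :=
  toWord_mk_of_isReduced (L := [(a, true), (b, false)]) <| by simp [isReduced_cons_cons, h]

theorem toWord_of_mul_of_mul_inv_of {a b : α} (h : a ≠ b) :
    (of a * of b * (of a)⁻¹).toWord = [(a, true), (b, true), (a, false)] :=
  toWord_mk_of_isReduced (L := [(a, true), (b, true), (a, false)]) <| by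
    simp [isReduced_cons_cons, h, Ne.symm h]

end FreeGroup

namespace ThreeOccurrences

open Set

variable {α K : Type*}

def totalOccurrences [DecidableEq α] [Fintype K] (w : K → FreeGroup α) (a : α) : ℕ :=
  ∑ k, ((w k).toWord.map Prod.fst).count a

structure IsThreeOccurrencePresentation (G : Type*) [Group G] {P T : Type*} [DecidableEq P]
    [Fintype T] (s : T → FreeGroup P) : Prop where
  injective : Injective s
  ne_one : ∀ τ, s τ ≠ 1
  nonempty_mulEquiv : Nonempty (G ≃* PresentedGroup (range s))
  totalOccurrences_eq : ∀ p, totalOccurrences s p = 3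

namespace IsThreeOccurrencePresentation

variable {G H P P' T T' : Type*} [Group G] [Group H] [DecidableEq P] [DecidableEq P'] [Fintype T]
  [Fintype T'] {s : T → FreeGroup P}

theorem of_mulEquiv (h : IsThreeOccurrencePresentation H s) (e : G ≃* H) :
    IsThreeOccurrencePresentation G s :=
  { h with nonempty_mulEquiv := h.nonempty_mulEquiv.map e.trans }

theorem reindex (h : IsThreeOccurrencePresentation G s) (e : P ≃ P') (f : T' ≃ T) :
    IsThreeOccurrencePresentation G fun τ => map e (s (f τ)) where
  injective := (map_injective e.injective).comp (h.injective.comp f.injective)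
  ne_one _ := (map_ne_one_iff _ (map_injective e.injective)).2 (h.ne_one _)
  nonempty_mulEquiv := by
    obtain ⟨φ⟩ := h.nonempty_mulEquiv
    have hrange : freeGroupCongr e '' range s = range fun τ => map e (s (f τ)) := by
      rw [← range_comp, ← EquivLike.range_comp _ f]
      rfl
    exact ⟨φ.trans ((PresentedGroup.equivPresentedGroup _ e).trans (hrange ▸ MulEquiv.refl _))⟩
  totalOccurrences_eq p := by
    rw [← h.totalOccurrences_eq (e.symm p), totalOccurrences, totalOccurrences,
      ← Equiv.sum_comp f]
    refine Finset.sum_congr rfl fun τ _ => ?_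
    rw [toWord_map_of_injective e.injective, List.map_map,
      show Prod.fst ∘ (fun y : P × Bool => (e y.1, y.2)) = e ∘ Prod.fst from rfl, ← List.map_map,
      ← List.count_map_of_injective _ _ e.injective, e.apply_symm_apply]

end IsThreeOccurrencePresentation

section Padding

variable (R : Set (FreeGroup α))

def padding : ↥(R \ {1}) ⊕ α ⊕ α → FreeGroup (α ⊕ α)
  | .inl r => map .inl r
  | .inr (.inl a) => of (.inr a)
  | .inr (.inr a) => of (.inl a) * of (.inr a) * (of (.inl a))⁻¹

theorem padding_ne_one (k : ↥(R \ {1}) ⊕ α ⊕ α) : padding R k ≠ 1 := by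
  rcases k with r | a | a
  · exact (map_ne_one_iff _ (map_injective Sum.inl_injective)).2 r.2.2
  · exact of_ne_one _
  · simp [padding]

theorem nonempty_mulEquiv_padding :
    Nonempty (PresentedGroup R ≃* PresentedGroup (range (padding R))) := by
  have hφ : (FreeGroup.lift fun a => PresentedGroup.of (.inl a)) =
      (PresentedGroup.mk (range (padding R))).comp (map Sum.inl) := by
    ext a
    rfl
  have hψ : (FreeGroup.lift (Sum.elim PresentedGroup.of 1)).comp (map (Sum.inl (β := α))) =
      PresentedGroup.mk R := by
    ext a
    rfl
  let φ : PresentedGroup R →* PresentedGroup (range (padding R)) :=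
    PresentedGroup.toGroup (f := fun a => PresentedGroup.of (.inl a)) <| by
      intro r hr
      rcases eq_or_ne r 1 with rfl | hr1
      · exact _root_.map_one _
      · rw [hφ]
        exact PresentedGroup.one_of_mem ⟨.inl ⟨r, hr, hr1⟩, rfl⟩
  let ψ : PresentedGroup (range (padding R)) →* PresentedGroup R :=
    PresentedGroup.toGroup (f := Sum.elim PresentedGroup.of 1) <| by
      rintro _ ⟨r | a | a, rfl⟩
      · rw [padding, ← MonoidHom.comp_apply, hψ]
        exact PresentedGroup.one_of_mem r.2.1
      · simp [padding]
      · simp [padding]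
  refine ⟨MonoidHom.toMulEquiv φ ψ ?_ ?_⟩
  · ext a
    simp [φ, ψ]
  · ext (a | a)
    · simp [φ, ψ]
    · change 1 = PresentedGroup.mk _ (padding R (.inr (.inl a)))
      exact (PresentedGroup.one_of_mem (mem_range_self _)).symm

end Padding

variable [DecidableEq α]

abbrev Occurrence (w : K → FreeGroup α) := Σ k, Fin (w k).toWord.length

variable {w : K → FreeGroup α}

def Occurrence.letter (p : Occurrence w) : α := (w p.1).toWord[p.2].1

variable (w) in
def splitRelator (k : K) : FreeGroup (Occurrence w) :=
  mk (List.ofFn fun i => (⟨k, i⟩, (w k).toWord[i].2))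

variable (w) in
def splitRelators (σ : Perm (Occurrence w)) : K ⊕ Occurrence w → FreeGroup (Occurrence w) :=
  Sum.elim (splitRelator w) fun p => of (σ p) * (of p)⁻¹

variable (w) in
theorem map_letter_splitRelator (k : K) : map Occurrence.letter (splitRelator w k) = w k := by
  simp [splitRelator, map.mk, Occurrence.letter, Function.comp_def, mk_toWord]

theorem splitRelator_ne_one {k : K} (hk : w k ≠ 1) : splitRelator w k ≠ 1 := fun h =>
  hk (by rw [← map_letter_splitRelator w k, h, _root_.map_one])

theorem nodup_ofFn_sigma_mk (k : K) : (List.ofFn fun i => (⟨k, i⟩ : Occurrence w)).Nodup :=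
  List.nodup_ofFn_ofInjective fun i j h => by simpa using h

section Isomorphism

variable {σ : Perm (Occurrence w)}

theorem letter_perm_apply (hσ : ∀ p q, σ.SameCycle p q ↔ p.letter = q.letter)
    (p : Occurrence w) : (σ p).letter = p.letter :=
  ((hσ _ _).1 (Perm.sameCycle_apply_right.2 .rfl)).symm

theorem of_eq_of_letter_eq (hσ : ∀ p q, σ.SameCycle p q ↔ p.letter = q.letter)
    {p q : Occurrence w} (h : p.letter = q.letter) :
    (PresentedGroup.of p : PresentedGroup (range (splitRelators w σ))) = PresentedGroup.of q :=
  ((hσ p q).2 h).apply_eq_of_comp_eq (g := PresentedGroup.of) <| funext fun x =>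
    PresentedGroup.mk_eq_mk_of_mul_inv_mem (mem_range_self (Sum.inr x))

theorem nonempty_mulEquiv_splitRelators (hσ : ∀ p q, σ.SameCycle p q ↔ p.letter = q.letter)
    (hletter : Surjective (Occurrence.letter (w := w))) :
    Nonempty (PresentedGroup (range w) ≃* PresentedGroup (range (splitRelators w σ))) := by
  obtain ⟨base, hbase⟩ := hletter.hasRightInverse
  have hφ : (FreeGroup.lift fun a => PresentedGroup.of (base a)).comp (map Occurrence.letter) =
      PresentedGroup.mk (range (splitRelators w σ)) := by
    ext p
    exact of_eq_of_letter_eq hσ (hbase p.letter)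
  have hψ : (FreeGroup.lift fun p : Occurrence w => PresentedGroup.of p.letter) =
      (PresentedGroup.mk (range w)).comp (map Occurrence.letter) := by
    ext p
    rfl
  let φ : PresentedGroup (range w) →* PresentedGroup (range (splitRelators w σ)) :=
    PresentedGroup.toGroup (f := fun a => PresentedGroup.of (base a)) <| by
      rintro _ ⟨k, rfl⟩
      rw [← map_letter_splitRelator w k, ← MonoidHom.comp_apply, hφ]
      exact PresentedGroup.one_of_mem ⟨Sum.inl k, rfl⟩
  let ψ : PresentedGroup (range (splitRelators w σ)) →* PresentedGroup (range w) :=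
    PresentedGroup.toGroup (f := fun p => PresentedGroup.of p.letter) <| by
      rintro _ ⟨k | p, rfl⟩
      · rw [hψ, MonoidHom.comp_apply, splitRelators, Sum.elim_inl, map_letter_splitRelator]
        exact PresentedGroup.one_of_mem ⟨k, rfl⟩
      · simp [splitRelators, letter_perm_apply hσ]
  refine ⟨MonoidHom.toMulEquiv φ ψ ?_ ?_⟩
  · ext a
    simp [φ, ψ, hbase a]
  · ext p
    simpa [φ, ψ] using of_eq_of_letter_eq hσ (hbase p.letter)

theorem splitRelators_ne_one (hw : ∀ k, w k ≠ 1) (hfix : ∀ p, σ p ≠ p) (τ : K ⊕ Occurrence w) :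
    splitRelators w σ τ ≠ 1 := by
  rcases τ with k | p
  · exact splitRelator_ne_one (hw k)
  · simpa [splitRelators, mul_inv_eq_one] using of_injective.ne (hfix p)

end Isomorphism

section Counting

variable [DecidableEq K] {σ : Perm (Occurrence w)}

theorem toWord_splitRelator (k : K) :
    (splitRelator w k).toWord = List.ofFn fun i => (⟨k, i⟩, (w k).toWord[i].2) :=
  toWord_mk_of_isReduced <| IsReduced.of_isChain_ne <| by
    rw [List.map_ofFn]
    exact (nodup_ofFn_sigma_mk k).isChain

theorem fst_fst_of_mem_toWord_splitRelator {k : K} {x : Occurrence w × Bool}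
    (hx : x ∈ (splitRelator w k).toWord) : x.1.1 = k := by
  rw [toWord_splitRelator, List.mem_ofFn] at hx
  obtain ⟨i, rfl⟩ := hx
  rfl

theorem splitRelator_injective (hw : ∀ k, w k ≠ 1) : Injective (splitRelator w) := by
  intro k k' h
  obtain ⟨x, hx⟩ :=
    List.exists_mem_of_ne_nil _ (mt toWord_eq_nil_iff.1 (splitRelator_ne_one (hw k)))
  exact (fst_fst_of_mem_toWord_splitRelator hx).symm.trans
    (fst_fst_of_mem_toWord_splitRelator (h ▸ hx))

theorem splitRelators_injective (hw : ∀ k, w k ≠ 1) (hletter : ∀ p, (σ p).letter = p.letter)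
    (hfix : ∀ p, σ p ≠ p) : Injective (splitRelators w σ) := by
  rintro (k | p) (k' | p') h <;> simp only [splitRelators, Sum.elim_inl, Sum.elim_inr] at h
  · rw [splitRelator_injective hw h]
  -- `map letter` sends a split relator to `w k ≠ 1` but a cyclic relator to `1`.
  · have := congrArg (map Occurrence.letter) h
    simp [map_letter_splitRelator, hletter] at this
    exact absurd this (hw k)
  · have := congrArg (map Occurrence.letter) h
    simp [map_letter_splitRelator, hletter] at this
    exact absurd this.symm (hw k')
  · have := congrArg toWord h
    rw [toWord_of_mul_inv_of (hfix p), toWord_of_mul_inv_of (hfix p')] at this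
    simp_all

theorem count_map_fst_toWord_splitRelator (k : K) (p : Occurrence w) :
    ((splitRelator w k).toWord.map Prod.fst).count p = if p.1 = k then 1 else 0 := by
  rw [toWord_splitRelator, List.map_ofFn]
  change (List.ofFn fun i => (⟨k, i⟩ : Occurrence w)).count p = _
  have hmem : p ∈ (List.ofFn fun i => (⟨k, i⟩ : Occurrence w)) ↔ p.1 = k := by
    rw [List.mem_ofFn]
    obtain ⟨k', i⟩ := p
    exact ⟨fun ⟨_, h⟩ => congrArg Sigma.fst h.symm, by rintro rfl; exact ⟨i, rfl⟩⟩
  simp only [List.Nodup.count (nodup_ofFn_sigma_mk k), hmem]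

theorem totalOccurrences_splitRelators [Fintype K] (hfix : ∀ p, σ p ≠ p) (p : Occurrence w) :
    totalOccurrences (splitRelators w σ) p = 3 := by
  rw [totalOccurrences, Fintype.sum_sum_type]
  simp only [splitRelators, Sum.elim_inl, Sum.elim_inr, count_map_fst_toWord_splitRelator,
    toWord_of_mul_inv_of (hfix _)]
  simp [List.count_cons, Finset.sum_add_distrib, ← Equiv.eq_symm_apply]

theorem exists_isThreeOccurrencePresentation_splitRelators [Fintype K] (hw : ∀ k, w k ≠ 1)
    (hocc : ∀ a, (Occurrence.letter ⁻¹' {a} : Set (Occurrence w)).Nontrivial) :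
    ∃ σ, IsThreeOccurrencePresentation (PresentedGroup (range w)) (splitRelators w σ) := by
  obtain ⟨σ, hσ⟩ := Perm.exists_sameCycle_iff_apply_eq_apply (Occurrence.letter (w := w))
  have hfix (p : Occurrence w) : σ p ≠ p := by
    obtain ⟨q, hq, hqp⟩ := (hocc p.letter).exists_ne p
    exact fun hp => hqp (((hσ p q).2 hq.symm).eq_of_left hp).symm
  exact ⟨σ, splitRelators_injective hw (letter_perm_apply hσ) hfix, splitRelators_ne_one hw hfix,
    nonempty_mulEquiv_splitRelators hσ fun a => (hocc a).nonempty,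
    totalOccurrences_splitRelators hfix⟩

end Counting

theorem nontrivial_letter_preimage_padding (R : Set (FreeGroup α)) (a : α ⊕ α) :
    (Occurrence.letter ⁻¹' {a} : Set (Occurrence (padding R))).Nontrivial := by
  have hconj (x : α) : (padding R (.inr (.inr x))).toWord =
      [(.inl x, true), (.inr x, true), (.inl x, false)] :=
    toWord_of_mul_of_mul_inv_of Sum.inl_ne_inr
  rcases a with x | x
  · exact ⟨⟨.inr (.inr x), 0, by simp [hconj]⟩, by simp [Occurrence.letter, hconj],
      ⟨.inr (.inr x), 2, by simp [hconj]⟩, by simp [Occurrence.letter, hconj], by simp⟩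
  · have hz : (padding R (.inr (.inl x))).toWord = [(.inr x, true)] := toWord_of _
    exact ⟨⟨.inr (.inl x), 0, by simp [hz]⟩, by simp [Occurrence.letter, hz],
      ⟨.inr (.inr x), 1, by simp [hconj]⟩, by simp [Occurrence.letter, hconj], by simp⟩

theorem exists_isThreeOccurrencePresentation {α : Type u} [Finite α] {R : Set (FreeGroup α)}
    (hR : R.Finite) :
    ∃ (P T : Type u) (_ : Fintype P) (_ : DecidableEq P) (_ : Fintype T) (s : T → FreeGroup P),
      IsThreeOccurrencePresentation (PresentedGroup R) s := by
  classical
  have := (hR.sdiff (t := {1})).to_subtype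
  have := Fintype.ofFinite (↥(R \ {1}) ⊕ α ⊕ α)
  obtain ⟨σ, hσ⟩ := exists_isThreeOccurrencePresentation_splitRelators (padding_ne_one R)
    (nontrivial_letter_preimage_padding R)
  obtain ⟨e⟩ := nonempty_mulEquiv_padding R
  exact ⟨_, _, inferInstance, inferInstance, inferInstance, _, hσ.of_mulEquiv e⟩

end ThreeOccurrences

/-- Every finitely presentable group admits a finite presentation (with pairwise distinct
nontrivial relators) in which every generator occurs, counted regardless of sign, exactly
three times among all the relators. -/
theorem exists_presentation_each_generator_occurs_thrice
    (G : Type*) [Group G]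
    (hG : ∃ (m : ℕ) (R : Set (FreeGroup (Fin m))),
        R.Finite ∧ Nonempty (G ≃* PresentedGroup R)) :
    ∃ (m t : ℕ) (s : Fin t → FreeGroup (Fin m)),
      Function.Injective s ∧
      (∀ j, s j ≠ 1) ∧
      Nonempty (G ≃* PresentedGroup (Set.range s)) ∧
      ∀ i : Fin m, (∑ j : Fin t, ((s j).toWord.map Prod.fst).count i) = 3 := by
  obtain ⟨m, R, hR, ⟨e⟩⟩ := hG
  obtain ⟨P, T, _, _, _, s, hs⟩ := ThreeOccurrences.exists_isThreeOccurrencePresentation hR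
  obtain ⟨hinj, hne, hiso, hocc⟩ :=
    (hs.of_mulEquiv e).reindex (Fintype.equivFin P) (Fintype.equivFin T).symm
  exact ⟨_, _, _, hinj, hne, hiso, hocc⟩
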